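/- arXiv:math/0604132 — 4 statements merged into one kernel-verified Lean document; each statement's English description precedes it below -/
import Mathlib

section
/- Fix k ≥ 1 and for an ordered multi-index j = (j_1,…,j_k) ∈ (ℤ∖{0})^k with |j_1| ≤ … ≤ |j_k| define μ(j) = |j_{k−2}| (the third largest modulus, with μ(j)=1 if k ≤ 2) and S(j) = |j_k| − |j_{k−1}| + μ(j). Then for every j ∈ ℤ^k with |j_1| ≤ … ≤ |j_k| and j_1 + j_2 + … + j_k = 0, one has S(j) ≤ (k−1) μ(j). -/
/-- For `k ≥ 3` and `j ∈ (ℤ∖{0})^k` ordered by increasing modulus with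
`j_1 + … + j_k = 0`, one has `S(j) ≤ (k−1) μ(j)` where `μ(j) = |j_{k−2}|`
(the third largest modulus) and `S(j) = |j_k| − |j_{k−1}| + μ(j)`. -/
theorem stmt_5 (k : ℕ) (hk : 3 ≤ k) (j : Fin k → ℤ)
    (hne : ∀ i, j i ≠ 0)
    (hord : ∀ i i' : Fin k, i ≤ i' → |j i| ≤ |j i'|)
    (hsum : ∑ i, j i = 0) :
    |j ⟨k - 1, by omega⟩| - |j ⟨k - 2, by omega⟩| + |j ⟨k - 3, by omega⟩| ≤
      ((k : ℤ) - 1) * |j ⟨k - 3, by omega⟩| := by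
  set a : Fin k := ⟨k - 1, by omega⟩ with ha
  set b : Fin k := ⟨k - 2, by omega⟩ with hb
  set c : Fin k := ⟨k - 3, by omega⟩ with hc
  have hsa : j a + ∑ i ∈ Finset.univ.erase a, j i = ∑ i, j i :=
    Finset.add_sum_erase _ _ (Finset.mem_univ a)
  have h1 : |j a| ≤ ∑ i ∈ Finset.univ.erase a, |j i| := by
    have : j a = -∑ i ∈ Finset.univ.erase a, j i := by
      rw [hsum] at hsa; linarith
    rw [this, abs_neg]
    exact Finset.abs_sum_le_sum_abs _ _
  have hba : b ∈ Finset.univ.erase a := by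
    simp [Finset.mem_erase, ha, hb, Fin.ext_iff]
    omega
  have h2 : ∑ i ∈ Finset.univ.erase a, |j i|
      = |j b| + ∑ i ∈ (Finset.univ.erase a).erase b, |j i| :=
    (Finset.add_sum_erase _ _ hba).symm
  have h3 : ∑ i ∈ (Finset.univ.erase a).erase b, |j i|
      ≤ ((Finset.univ.erase a).erase b).card • |j c| := by
    apply Finset.sum_le_card_nsmul
    intro i hi
    apply hord
    simp only [Finset.mem_erase, Finset.mem_univ, and_true] at hi
    have h1 : i.val ≠ k - 2 := fun h => hi.1 (Fin.ext h)
    have h2 : i.val ≠ k - 1 := fun h => hi.2 (Fin.ext h)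
    have := i.isLt
    simp only [hc, Fin.le_def]
    omega
  have hcard : ((Finset.univ.erase a).erase b).card = k - 2 := by
    rw [Finset.card_erase_of_mem hba, Finset.card_erase_of_mem (Finset.mem_univ a)]
    simp; omega
  rw [hcard] at h3
  have hk2 : ((k - 2 : ℕ) : ℤ) = (k : ℤ) - 2 := by
    push_cast [Nat.cast_sub (by omega : 2 ≤ k)]; ring
  rw [nsmul_eq_mul, hk2] at h3
  have hcnn : 0 ≤ |j c| := abs_nonneg _
  nlinarith [h1, h2, h3]
end

section
/- Let k ≥ 3, and for j a multi-index let μ(j) denote the third largest modulus among its entries, S(j) = (largest) − (second largest) + μ(j). For m a positive integer and (j,l) multi-indices: if m > μ(j,l), then (1+m) · S(m,j,l) ≥ S(j,l), where (m,j,l) denotes the concatenated multi-index. -/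
/-- The list sorted in decreasing order. -/
def sortD (m : List ℕ) : List ℕ := m.insertionSort (· ≥ ·)

/-- `μ`: the third largest entry of a multi-index (by modulus), `1` for short lists. -/
def mu3 (m : List ℕ) : ℕ := (sortD m).getD 2 1

/-- `S`: (largest) − (second largest) + (third largest). -/
def SS (m : List ℕ) : ℕ := ((sortD m).getD 0 1 - (sortD m).getD 1 1) + mu3 m

lemma key_stmt7 (L : List ℕ) (hpos : ∀ x ∈ L, 1 ≤ x) (hlen : 3 ≤ L.length)
    (m : ℕ) (hm : 0 < m) (hmu : mu3 L < m) :
    SS L ≤ (1 + m) * SS (m :: L) := by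
  have hsorted : List.Pairwise (· ≥ ·) (sortD L) := List.pairwise_insertionSort _ L
  have hperm : (sortD L).Perm L := List.perm_insertionSort _ L
  have hlens : 3 ≤ (sortD L).length := by
    rw [sortD, List.length_insertionSort]; exact hlen
  obtain ⟨a, b, c, t, hs⟩ : ∃ a b c t, sortD L = a :: b :: c :: t := by
    match h : sortD L with
    | [] => rw [h] at hlens; simp at hlens
    | [a] => rw [h] at hlens; simp at hlens
    | [a, b] => rw [h] at hlens; simp at hlens
    | a :: b :: c :: t => exact ⟨a, b, c, t, rfl⟩
  rw [hs] at hsorted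
  have hb1 : 1 ≤ b := hpos b (hperm.mem_iff.mp (by simp [hs]))
  have hc1 : 1 ≤ c := hpos c (hperm.mem_iff.mp (by simp [hs]))
  have hab : b ≤ a := (List.pairwise_cons.mp hsorted).1 b (by simp)
  have hbc : c ≤ b := (List.pairwise_cons.mp (List.pairwise_cons.mp hsorted).2).1 c (by simp)
  have hcm : c < m := by rwa [mu3, hs] at hmu
  have hSL : SS L = a - b + c := by simp [SS, mu3, hs]
  have hins : sortD (m :: L) = List.orderedInsert (· ≥ ·) m (sortD L) := rfl
  rw [hs] at hins
  by_cases h1 : a ≤ m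
  · have hs' : sortD (m :: L) = m :: a :: b :: c :: t := by
      rw [hins, List.orderedInsert, if_pos h1]
    have hSL' : SS (m :: L) = m - a + b := by simp [SS, mu3, hs']
    rw [hSL, hSL']
    calc a - b + c ≤ m := by omega
      _ ≤ (1 + m) * 1 := by omega
      _ ≤ (1 + m) * (m - a + b) := Nat.mul_le_mul_left _ (by omega)
  · by_cases h2 : b ≤ m
    · have hs' : sortD (m :: L) = a :: m :: b :: c :: t := by
        rw [hins, List.orderedInsert, if_neg h1, List.orderedInsert, if_pos h2]
      have hSL' : SS (m :: L) = a - m + b := by simp [SS, mu3, hs']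
      rw [hSL, hSL']
      obtain ⟨e, he, rfl⟩ : ∃ e, 1 ≤ e ∧ a = m + e := ⟨a - m, by omega, by omega⟩
      have hsub : m + e - m + b = e + b := by omega
      rw [hsub]
      have : m + e ≤ (1 + m) * (e + b) := by nlinarith
      omega
    · have h3 : c ≤ m := by omega
      have hs' : sortD (m :: L) = a :: b :: m :: c :: t := by
        rw [hins, List.orderedInsert, if_neg h1, List.orderedInsert, if_neg h2,
          List.orderedInsert, if_pos h3]
      have hSL' : SS (m :: L) = a - b + m := by simp [SS, mu3, hs']
      rw [hSL, hSL']
      calc a - b + c ≤ a - b + m := by omega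
        _ ≤ (1 + m) * (a - b + m) := Nat.le_mul_of_pos_left _ (by omega)

/-- If `m > μ(j,l)` then `(1+m) · S(m,j,l) ≥ S(j,l)`, where `(m,j,l)` is the
concatenated multi-index and all entries of `j`, `l` are nonzero integers. -/
theorem stmt_7 (j l : List ℤ)
    (hj : ∀ x ∈ j, x ≠ 0) (hl : ∀ x ∈ l, x ≠ 0)
    (hlen : 3 ≤ j.length + l.length)
    (m : ℕ) (hm : 0 < m)
    (hmu : mu3 ((j ++ l).map Int.natAbs) < m) :
    SS ((j ++ l).map Int.natAbs) ≤ (1 + m) * SS (m :: (j ++ l).map Int.natAbs) := by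
  apply key_stmt7
  · intro x hx
    simp only [List.mem_map, List.mem_append] at hx
    obtain ⟨y, hy, rfl⟩ := hx
    rcases hy with hy | hy
    · exact Int.natAbs_pos.mpr (hj y hy)
    · exact Int.natAbs_pos.mpr (hl y hy)
  · simpa using hlen
  · exact hm
  · exact hmu
end

section
/- (Homological equation, finite dimension.) Let H_0 = Σ_{j=1}^n ω_j ξ_j η_j and let Q be a homogeneous polynomial of degree k in (ξ, η) with coefficients a_{jl} satisfying the reality condition ā_{jl} = a_{lj}. Then there exist homogeneous polynomials χ and Z of degree k, also satisfying the reality condition, such that {H_0, χ} + Q = Z and {Z, H_0} = 0. -/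
/-!
On the monomial basis the operator `χ ↦ {H₀, χ}` is diagonal with eigenvalue `-iΩ(j)` on the
monomial `j`. So `Q` is solved monomial by monomial: non-resonant coefficients are divided by
`iΩ(j)` and moved into `χ`, resonant ones stay in `Z`. Exchanging `ξ` and `η` negates `Ω`, which
is exactly what makes both pieces inherit the reality condition from `Q`.
-/

/-- The small divisor `Ω` of a degree-`k` monomial: each factor is a pair
`(i, b)` where `i` is a mode and `b = true` for a `ξ`-factor (contributing `+ω_i`),
`b = false` for an `η`-factor (contributing `−ω_i`). -/
def Omega {n k : ℕ} (ω : Fin n → ℝ) (j : Fin k → Fin n × Bool) : ℝ :=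
  ∑ i, (if (j i).2 then ω (j i).1 else -ω (j i).1)

/-- The monomial obtained by exchanging all `ξ` and `η` factors. -/
def swapMono {n k : ℕ} (j : Fin k → Fin n × Bool) : Fin k → Fin n × Bool :=
  fun i => ((j i).1, !(j i).2)

open ComplexConjugate

section Homological

variable {M : Type*} (Ω : M → ℝ) (a : M → ℂ)

/-- On resonant monomials (`Ω j = 0`) the division is by zero, so the coefficient is `0`. -/
noncomputable def homologicalSolution : M → ℂ := fun j => a j / (Complex.I * Ω j)

noncomputable def resonantPart : M → ℂ := fun j => if Ω j = 0 then a j else 0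

theorem homological_equation (j : M) :
    -Complex.I * Ω j * homologicalSolution Ω a j + a j = resonantPart Ω a j := by
  by_cases h : Ω j = 0
  · simp [homologicalSolution, resonantPart, h]
  · have hI : Complex.I * Ω j ≠ 0 := mul_ne_zero Complex.I_ne_zero (Complex.ofReal_ne_zero.2 h)
    rw [homologicalSolution, resonantPart, if_neg h, neg_mul, neg_mul, mul_div_cancel₀ _ hI,
      neg_add_cancel]

theorem resonantPart_eq_zero {j : M} (h : Ω j ≠ 0) : resonantPart Ω a j = 0 := if_neg h

variable {Ω a} {σ : M → M}

theorem homologicalSolution_conj (hΩ : ∀ j, Ω (σ j) = -Ω j) (ha : ∀ j, conj (a j) = a (σ j))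
    (j : M) : conj (homologicalSolution Ω a j) = homologicalSolution Ω a (σ j) := by
  simp only [homologicalSolution, map_div₀, map_mul, Complex.conj_I, Complex.conj_ofReal, ha, hΩ,
    Complex.ofReal_neg, neg_mul, mul_neg]

theorem resonantPart_conj (hΩ : ∀ j, Ω (σ j) = -Ω j) (ha : ∀ j, conj (a j) = a (σ j)) (j : M) :
    conj (resonantPart Ω a j) = resonantPart Ω a (σ j) := by
  simp only [resonantPart, hΩ, neg_eq_zero]
  split_ifs <;> simp [ha]

end Homological

theorem Omega_swapMono {n k : ℕ} (ω : Fin n → ℝ) (j : Fin k → Fin n × Bool) :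
    Omega ω (swapMono j) = -Omega ω j := by
  simp only [Omega, swapMono, ← Finset.sum_neg_distrib]
  refine Finset.sum_congr rfl fun i _ => ?_
  by_cases h : (j i).2 <;> simp [h]

/-- Homological equation in finite dimension, at the level of coefficients of
homogeneous polynomials of degree `k`: given real `Q` (coefficients `a` with
`conj a_{jl} = a_{lj}`), there are real `χ` (coefficients `b`) and `Z`
(coefficients `c`) with `{H₀,χ} + Q = Z` (i.e. `−iΩ(j) b_j + a_j = c_j`) and
`{Z,H₀} = 0` (i.e. `c_j = 0` whenever `Ω(j) ≠ 0`). -/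
theorem stmt_14 (n k : ℕ) (ω : Fin n → ℝ)
    (a : (Fin k → Fin n × Bool) → ℂ)
    (ha : ∀ j, (starRingEnd ℂ) (a j) = a (swapMono j)) :
    ∃ b c : (Fin k → Fin n × Bool) → ℂ,
      (∀ j, (starRingEnd ℂ) (b j) = b (swapMono j)) ∧
      (∀ j, (starRingEnd ℂ) (c j) = c (swapMono j)) ∧
      (∀ j, -Complex.I * (Omega ω j : ℂ) * b j + a j = c j) ∧
      (∀ j, Omega ω j ≠ 0 → c j = 0) :=
  ⟨homologicalSolution (Omega ω) a, resonantPart (Omega ω) a,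
    homologicalSolution_conj (Omega_swapMono ω) ha, resonantPart_conj (Omega_swapMono ω) ha,
    homological_equation (Omega ω) a, fun _ => resonantPart_eq_zero (Omega ω) a⟩
end

section
/- Let s, ν be real numbers with s > ν + 1/2, and k ≥ 2. Let P(z) = Σ_{j ∈ (ℤ∖{0})^{k+1}} a_j z_{j_1}⋯z_{j_{k+1}} be a homogeneous polynomial whose coefficients satisfy |a_j| ≤ C μ(j)^ν (where μ(j) is the third largest among |j_1|,…,|j_{k+1}|, and using μ(j)/S(j) ≤ 1). Then P extends to a continuous polynomial on ℓ²_s and there is a constant C' with |P(z)| ≤ C' ‖z‖_s^{k+1} for all z, where ‖z‖_s² = Σ_j |j|^{2s}|z_j|². -/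
lemma mu3_mem (l : List ℕ) (h3 : 3 ≤ l.length) : mu3 l ∈ l := by
  have hlen : (sortD l).length = l.length := List.length_insertionSort _ _
  have h2 : 2 < (sortD l).length := by omega
  have : mu3 l ∈ sortD l := by
    rw [mu3, List.getD_eq_getElem _ _ h2]
    exact List.getElem_mem h2
  exact (List.perm_insertionSort _ l).mem_iff.mp this

lemma mu3_le_prod (l : List ℕ) (hl : ∀ x ∈ l, 1 ≤ x) (h3 : 3 ≤ l.length) :
    mu3 l ≤ l.prod :=
  List.single_le_prod hl _ (mu3_mem l h3)

/-- Summability and value of `tsum` of products over pi types. -/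
lemma pi_prod_summable {ι : Type*} (B : ι → ℝ) (hB0 : ∀ m, 0 ≤ B m) (hB : Summable B) :
    ∀ n : ℕ, Summable (fun j : Fin n → ι => ∏ i, B (j i)) ∧
      (∑' j : Fin n → ι, ∏ i, B (j i)) = (∑' m, B m) ^ n := by
  intro n
  induction n with
  | zero => exact ⟨Summable.of_finite, by simp⟩
  | succ n ih =>
    have hcomp : ∀ p : ι × (Fin n → ι),
        (∏ i, B (((Fin.consEquiv fun _ => ι) p) i)) = B p.1 * ∏ i, B (p.2 i) := by
      intro p
      rw [show ((Fin.consEquiv fun _ => ι) p) = Fin.cons p.1 p.2 from rfl, Fin.prod_univ_succ]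
      simp
    have hsum2 : Summable (fun p : ι × (Fin n → ι) => B p.1 * ∏ i, B (p.2 i)) := by
      refine Summable.mul_of_nonneg (f := B) (g := fun j : Fin n → ι => ∏ i, B (j i))
        hB ih.1 ?_ ?_
      · exact hB0
      · exact fun f => Finset.prod_nonneg fun i _ => hB0 _
    have hsum : Summable (fun j : Fin (n + 1) → ι => ∏ i, B (j i)) :=
      ((Fin.consEquiv fun _ => ι).summable_iff
        (f := fun j : Fin (n + 1) → ι => ∏ i, B (j i))).mp
        (hsum2.congr fun p => (hcomp p).symm)
    refine ⟨hsum, ?_⟩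
    have he := (Fin.consEquiv fun _ => ι).tsum_eq (f := fun j : Fin (n + 1) → ι => ∏ i, B (j i))
    rw [← he]
    calc (∑' p : ι × (Fin n → ι), ∏ i, B (((Fin.consEquiv fun _ => ι) p) i))
        = ∑' p : ι × (Fin n → ι), B p.1 * ∏ i, B (p.2 i) := tsum_congr hcomp
      _ = ∑' (x : ι) (f : Fin n → ι), B x * ∏ i, B (f i) :=
          Summable.tsum_prod' hsum2 (fun x => ih.1.mul_left (B x))
      _ = ∑' (x : ι), B x * ∑' f : Fin n → ι, ∏ i, B (f i) :=
          tsum_congr fun x => tsum_mul_left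
      _ = (∑' m, B m) * (∑' f : Fin n → ι, ∏ i, B (f i)) := by rw [tsum_mul_right]
      _ = (∑' m, B m) ^ (n + 1) := by rw [ih.2, pow_succ, mul_comm]

/-- Proposition 6.1(i): a homogeneous polynomial of degree `k+1` whose coefficients
satisfy `|a_j| ≤ C μ(j)^ν` extends to a continuous polynomial on `ℓ²_s` for
`s > ν + 1/2`, with `|P(z)| ≤ C' ‖z‖_s^{k+1}`. -/
theorem stmt_16 (s ν : ℝ) (hν : 0 ≤ ν) (hs : ν + 1 / 2 < s)
    (k : ℕ) (hk : 2 ≤ k) (C : ℝ) (hC : 0 < C)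
    (a : (Fin (k + 1) → {m : ℤ // m ≠ 0}) → ℂ)
    (ha : ∀ j, ‖a j‖ ≤ C * (mu3 (List.ofFn fun i => ((j i : ℤ)).natAbs) : ℝ) ^ ν) :
    ∃ C' : ℝ, 0 < C' ∧ ∀ z : {m : ℤ // m ≠ 0} → ℂ,
      Summable (fun m : {m : ℤ // m ≠ 0} => ((m : ℤ).natAbs : ℝ) ^ ((2 : ℝ) * s) * ‖z m‖ ^ 2) →
      Summable (fun j : Fin (k + 1) → {m : ℤ // m ≠ 0} => ‖a j * ∏ i, z (j i)‖) ∧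
      ‖∑' j : Fin (k + 1) → {m : ℤ // m ≠ 0}, a j * ∏ i, z (j i)‖ ≤
        C' * Real.sqrt (∑' m : {m : ℤ // m ≠ 0},
            ((m : ℤ).natAbs : ℝ) ^ ((2 : ℝ) * s) * ‖z m‖ ^ 2) ^ (k + 1) := by
  have hone : ∀ m : {m : ℤ // m ≠ 0}, (1 : ℝ) ≤ ((m : ℤ).natAbs : ℝ) := by
    intro m
    have : 1 ≤ (m : ℤ).natAbs := Int.natAbs_pos.mpr m.2
    exact_mod_cast this
  have hpos : ∀ m : {m : ℤ // m ≠ 0}, (0 : ℝ) < ((m : ℤ).natAbs : ℝ) :=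
    fun m => lt_of_lt_of_le one_pos (hone m)
  -- the weight function w m = |m|^(-2(s-ν)) is summable
  have h2t : 1 < 2 * (s - ν) := by linarith
  set w : {m : ℤ // m ≠ 0} → ℝ :=
    fun m => ((m : ℤ).natAbs : ℝ) ^ (-(2 * (s - ν))) with hw_def
  have hw : Summable w := by
    have h0 : Summable fun n : ℤ => |(n : ℝ)| ^ (-(2 * (s - ν))) :=
      Real.summable_abs_int_rpow h2t
    have h1 : Summable fun m : {n : ℤ // n ≠ 0} => |((m : ℤ) : ℝ)| ^ (-(2 * (s - ν))) :=
      h0.subtype {n : ℤ | n ≠ 0}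
    refine h1.congr fun m => ?_
    congr 1
    rw [Nat.cast_natAbs]
    push_cast
    ring
  have hw0 : ∀ m, 0 ≤ w m := fun m => Real.rpow_nonneg (le_of_lt (hpos m)) _
  set K : ℝ := Real.sqrt (∑' m, w m) with hK_def
  have hK0 : 0 ≤ K := Real.sqrt_nonneg _
  refine ⟨C * (K + 1) ^ (k + 1), by positivity, ?_⟩
  intro z hz
  set S : ℝ := ∑' m : {m : ℤ // m ≠ 0}, ((m : ℤ).natAbs : ℝ) ^ ((2 : ℝ) * s) * ‖z m‖ ^ 2
    with hS_def
  have hS0 : 0 ≤ S := tsum_nonneg fun m => by positivity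
  -- the one-variable bounding sequence
  set B : {m : ℤ // m ≠ 0} → ℝ := fun m => ((m : ℤ).natAbs : ℝ) ^ ν * ‖z m‖ with hB_def
  have hB0 : ∀ m, 0 ≤ B m :=
    fun m => mul_nonneg (Real.rpow_nonneg (le_of_lt (hpos m)) _) (norm_nonneg _)
  -- factorization B = u * v with u² = w, v² = summand
  set u : {m : ℤ // m ≠ 0} → ℝ := fun m => ((m : ℤ).natAbs : ℝ) ^ (ν - s) with hu_def
  set v : {m : ℤ // m ≠ 0} → ℝ := fun m => ((m : ℤ).natAbs : ℝ) ^ s * ‖z m‖ with hv_def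
  have huv : ∀ m, B m = u m * v m := by
    intro m
    simp only [hu_def, hv_def, hB_def]
    rw [← mul_assoc, ← Real.rpow_add (hpos m)]
    ring_nf
  have hu2 : ∀ m, u m ^ 2 = w m := by
    intro m
    simp only [hu_def, hw_def]
    rw [sq, ← Real.rpow_add (hpos m)]
    ring_nf
  have hv2 : ∀ m, v m ^ 2 = ((m : ℤ).natAbs : ℝ) ^ ((2 : ℝ) * s) * ‖z m‖ ^ 2 := by
    intro m
    simp only [hv_def]
    rw [mul_pow, sq (((m : ℤ).natAbs : ℝ) ^ s), ← Real.rpow_add (hpos m)]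
    ring_nf
  have hzv : Summable (fun m => v m ^ 2) := hz.congr fun m => (hv2 m).symm
  -- summability of B
  have hBsum : Summable B := by
    refine Summable.of_nonneg_of_le hB0 (fun m => ?_) (((hw.add hzv).mul_left (1 / 2)))
    rw [huv m]
    have hu0 : 0 ≤ u m := Real.rpow_nonneg (le_of_lt (hpos m)) _
    have hv0 : 0 ≤ v m := mul_nonneg (Real.rpow_nonneg (le_of_lt (hpos m)) _) (norm_nonneg _)
    rw [← hu2 m]
    nlinarith [sq_nonneg (u m - v m)]
  -- Cauchy–Schwarz: tsum B ≤ K * sqrt S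
  have hCS : (∑' m, B m) ≤ K * Real.sqrt S := by
    refine Summable.tsum_le_of_sum_le hBsum fun F => ?_
    calc ∑ m ∈ F, B m = ∑ m ∈ F, u m * v m := Finset.sum_congr rfl fun m _ => huv m
      _ ≤ Real.sqrt (∑ m ∈ F, u m ^ 2) * Real.sqrt (∑ m ∈ F, v m ^ 2) :=
          Real.sum_mul_le_sqrt_mul_sqrt F u v
      _ ≤ K * Real.sqrt S := by
          have h1 : ∑ m ∈ F, u m ^ 2 ≤ ∑' m, w m := by
            rw [Finset.sum_congr rfl fun m _ => hu2 m]
            exact Summable.sum_le_tsum F (fun m _ => hw0 m) hw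
          have h2 : ∑ m ∈ F, v m ^ 2 ≤ S := by
            rw [Finset.sum_congr rfl fun m _ => hv2 m]
            exact Summable.sum_le_tsum F (fun m _ => by positivity) hz
          exact mul_le_mul (Real.sqrt_le_sqrt h1) (Real.sqrt_le_sqrt h2)
            (Real.sqrt_nonneg _) hK0
  -- pointwise bound on coefficients times monomials
  have hkey : ∀ j : Fin (k + 1) → {m : ℤ // m ≠ 0},
      ‖a j * ∏ i, z (j i)‖ ≤ C * ∏ i, B (j i) := by
    intro j
    have hmu : ((mu3 (List.ofFn fun i => ((j i : ℤ)).natAbs) : ℝ)) ^ ν ≤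
        ∏ i, ((j i : ℤ).natAbs : ℝ) ^ ν := by
      have hlen : (List.ofFn fun i => ((j i : ℤ)).natAbs).length = k + 1 := by simp
      have hle : mu3 (List.ofFn fun i => ((j i : ℤ)).natAbs) ≤
          ∏ i, ((j i : ℤ)).natAbs := by
        rw [← List.prod_ofFn]
        refine mu3_le_prod _ (fun x hx => ?_) (by omega)
        simp only [List.mem_ofFn] at hx
        obtain ⟨i, rfl⟩ := hx
        exact Int.natAbs_pos.mpr (j i).2
      have hleR : ((mu3 (List.ofFn fun i => ((j i : ℤ)).natAbs) : ℝ)) ≤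
          ∏ i, ((j i : ℤ).natAbs : ℝ) := by
        exact_mod_cast hle
      calc ((mu3 (List.ofFn fun i => ((j i : ℤ)).natAbs) : ℝ)) ^ ν
          ≤ (∏ i, ((j i : ℤ).natAbs : ℝ)) ^ ν :=
            Real.rpow_le_rpow (Nat.cast_nonneg _) hleR hν
        _ = ∏ i, ((j i : ℤ).natAbs : ℝ) ^ ν :=
            (Real.finset_prod_rpow _ _ (fun i _ => le_of_lt (hpos _)) ν).symm
    calc ‖a j * ∏ i, z (j i)‖ = ‖a j‖ * ∏ i, ‖z (j i)‖ := by
          rw [norm_mul, norm_prod]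
      _ ≤ (C * (mu3 (List.ofFn fun i => ((j i : ℤ)).natAbs) : ℝ) ^ ν) * ∏ i, ‖z (j i)‖ :=
          mul_le_mul_of_nonneg_right (ha j)
            (Finset.prod_nonneg fun i _ => norm_nonneg _)
      _ ≤ (C * ∏ i, ((j i : ℤ).natAbs : ℝ) ^ ν) * ∏ i, ‖z (j i)‖ :=
          mul_le_mul_of_nonneg_right (mul_le_mul_of_nonneg_left hmu (le_of_lt hC))
            (Finset.prod_nonneg fun i _ => norm_nonneg _)
      _ = C * ∏ i, B (j i) := by
          rw [mul_assoc, ← Finset.prod_mul_distrib]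
  obtain ⟨hPsum, hPtsum⟩ := pi_prod_summable B hB0 hBsum (k + 1)
  have hsum : Summable (fun j : Fin (k + 1) → {m : ℤ // m ≠ 0} => ‖a j * ∏ i, z (j i)‖) :=
    Summable.of_nonneg_of_le (fun j => norm_nonneg _) hkey (hPsum.mul_left C)
  refine ⟨hsum, ?_⟩
  calc ‖∑' j : Fin (k + 1) → {m : ℤ // m ≠ 0}, a j * ∏ i, z (j i)‖
      ≤ ∑' j : Fin (k + 1) → {m : ℤ // m ≠ 0}, ‖a j * ∏ i, z (j i)‖ :=
        norm_tsum_le_tsum_norm hsum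
    _ ≤ ∑' j : Fin (k + 1) → {m : ℤ // m ≠ 0}, C * ∏ i, B (j i) :=
        Summable.tsum_le_tsum hkey hsum (hPsum.mul_left C)
    _ = C * (∑' m, B m) ^ (k + 1) := by rw [tsum_mul_left, hPtsum]
    _ ≤ C * ((K + 1) * Real.sqrt S) ^ (k + 1) := by
        refine mul_le_mul_of_nonneg_left (pow_le_pow_left₀ (tsum_nonneg hB0) ?_ _) (le_of_lt hC)
        calc (∑' m, B m) ≤ K * Real.sqrt S := hCS
          _ ≤ (K + 1) * Real.sqrt S :=
            mul_le_mul_of_nonneg_right (by linarith) (Real.sqrt_nonneg _)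
    _ = C * (K + 1) ^ (k + 1) * Real.sqrt S ^ (k + 1) := by rw [mul_pow]; ring
end
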